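/- In the three-signal game specified in the context, the strategy profile π with π₁(s'|θ') = π₁(s'|θ'') = 1, π₂(a'|s') = 1, π₂(a''|s'') = 1, π₂(a''|s''') = 1 is a rationality-compatible equilibrium (RCE). -/

import Mathlib

open scoped Classical
open Finset Filter

noncomputable section

/-- `p` is a probability distribution on the finite type `X`. -/
def IsDist {X : Type*} [Fintype X] (p : X → ℝ) : Prop :=
  (∀ x, 0 ≤ p x) ∧ ∑ x, p x = 1

variable {Θ S A : Type*} [Fintype Θ] [Fintype S] [Fintype A]

/-- Sender's expected payoff `u₁(θ, s, π₂(·|s))` from signal `s` when the receiver plays `π₂`. -/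
def u1R (u₁ : Θ → S → A → ℝ) (π₂ : S → A → ℝ) (θ : Θ) (s : S) : ℝ :=
  ∑ a, π₂ s a * u₁ θ s a

/-- Receiver's expected payoff of action `a` after signal `s` under belief `p`. -/
def expU2 (u₂ : Θ → S → A → ℝ) (p : Θ → ℝ) (s : S) (a : A) : ℝ :=
  ∑ θ, p θ * u₂ θ s a

/-- `BR(p, s)`: pure best responses to belief `p` after signal `s`. -/
def BRb (u₂ : Θ → S → A → ℝ) (p : Θ → ℝ) (s : S) : Set A :=
  {a | ∀ a', expU2 u₂ p s a' ≤ expU2 u₂ p s a}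

/-- `A_s^BR`: actions that best respond to some belief after `s`. -/
def ABR (u₂ : Θ → S → A → ℝ) (s : S) : Set A :=
  {a | ∃ p, IsDist p ∧ a ∈ BRb u₂ p s}

/-- Membership in `Π₂•`: a receiver behavior strategy supported on `A_s^BR` after every `s`. -/
def Rational2 (u₂ : Θ → S → A → ℝ) (π₂ : S → A → ℝ) : Prop :=
  (∀ s, IsDist (π₂ s)) ∧ ∀ s a, π₂ s a ≠ 0 → a ∈ ABR u₂ s

/-- `u₁(θ,s,π₂(·|s)) ≥ max_{s' ≠ s} u₁(θ,s',π₂(·|s'))`. -/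
def WeakBest (u₁ : Θ → S → A → ℝ) (π₂ : S → A → ℝ) (θ : Θ) (s : S) : Prop :=
  ∀ s', s' ≠ s → u1R u₁ π₂ θ s' ≤ u1R u₁ π₂ θ s

/-- `u₁(θ,s,π₂(·|s)) > max_{s' ≠ s} u₁(θ,s',π₂(·|s'))`. -/
def StrictBest (u₁ : Θ → S → A → ℝ) (π₂ : S → A → ℝ) (θ : Θ) (s : S) : Prop :=
  ∀ s', s' ≠ s → u1R u₁ π₂ θ s' < u1R u₁ π₂ θ s

/-- `θ' ≿_s θ''`: `s` is more rationally-compatible with `θ'` than with `θ''`. -/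
def MoreCompat (u₁ u₂ : Θ → S → A → ℝ) (s : S) (θ' θ'' : Θ) : Prop :=
  ∀ π₂, Rational2 u₂ π₂ → WeakBest u₁ π₂ θ'' s → StrictBest u₁ π₂ θ' s

/-- `s` maximizes `s' ↦ u₁(θ, s', π₂(·|s'))`. -/
def GlobalBest (u₁ : Θ → S → A → ℝ) (π₂ : S → A → ℝ) (θ : Θ) (s : S) : Prop :=
  ∀ s', u1R u₁ π₂ θ s' ≤ u1R u₁ π₂ θ s

/-- `S_θ`: signals that best respond to some (not necessarily rational) receiver strategy. -/
def Sθ (u₁ : Θ → S → A → ℝ) (θ : Θ) : Set S :=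
  {s | ∃ π₂ : S → A → ℝ, (∀ s', IsDist (π₂ s')) ∧ GlobalBest u₁ π₂ θ s}

/-- `Θ_s`: types for which `s` is not dominated. -/
def Θtypes (u₁ : Θ → S → A → ℝ) (s : S) : Set Θ := {θ | s ∈ Sθ u₁ θ}

/-- Membership in `Π₁•`. -/
def Rational1 (u₁ : Θ → S → A → ℝ) (π₁ : Θ → S → ℝ) : Prop :=
  (∀ θ, IsDist (π₁ θ)) ∧ ∀ θ s, π₁ θ s ≠ 0 → s ∈ Sθ u₁ θ

/-- Nash equilibrium of the signaling game. -/
def NashEq (lam : Θ → ℝ) (u₁ u₂ : Θ → S → A → ℝ)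
    (π₁ : Θ → S → ℝ) (π₂ : S → A → ℝ) : Prop :=
  (∀ θ, IsDist (π₁ θ)) ∧ (∀ s, IsDist (π₂ s)) ∧
  (∀ θ s, π₁ θ s ≠ 0 → GlobalBest u₁ π₂ θ s) ∧
  (∀ s, (∃ θ, π₁ θ s ≠ 0) → ∀ a, π₂ s a ≠ 0 →
    ∀ a', ∑ θ, lam θ * π₁ θ s * u₂ θ s a' ≤ ∑ θ, lam θ * π₁ θ s * u₂ θ s a)

/-- Equilibrium expected payoff `E_π[u₁ | θ]`. -/
def eqPayoff (u₁ : Θ → S → A → ℝ) (π₁ : Θ → S → ℝ) (π₂ : S → A → ℝ) (θ : Θ) : ℝ :=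
  ∑ s, π₁ θ s * u1R u₁ π₂ θ s

/-- `s` is off the path of play of `π₁`. -/
def OffPath (π₁ : Θ → S → ℝ) (s : S) : Prop := ∀ θ, π₁ θ s = 0

/-- `J̃(s, π)`: types for which some best response to `s` weakly improves on the equilibrium. -/
def Jt (u₁ u₂ : Θ → S → A → ℝ) (π₁ : Θ → S → ℝ) (π₂ : S → A → ℝ) (s : S) : Set Θ :=
  {θ | ∃ a ∈ ABR u₂ s, eqPayoff u₁ π₁ π₂ θ ≤ u₁ θ s a}

/-- The odds-ratio condition defining `P_{θ'▷θ''}`. -/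
def OddsLe (lam : Θ → ℝ) (θ' θ'' : Θ) (p : Θ → ℝ) : Prop :=
  p θ'' * lam θ' ≤ lam θ'' * p θ'

/-- `Δ(T)`: beliefs supported on `T`. -/
def DeltaOn {Θ : Type*} [Fintype Θ] (T : Set Θ) : Set (Θ → ℝ) :=
  {p | IsDist p ∧ ∀ θ ∉ T, p θ = 0}

/-- `P̃(s, π)`: rationality-compatible beliefs at profile `π`. -/
def Pt (lam : Θ → ℝ) (u₁ u₂ : Θ → S → A → ℝ) (π₁ : Θ → S → ℝ) (π₂ : S → A → ℝ)
    (s : S) : Set (Θ → ℝ) :=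
  if (Jt u₁ u₂ π₁ π₂ s).Nonempty then
    DeltaOn (Jt u₁ u₂ π₁ π₂ s) ∩
      {p | ∀ θ' θ'', MoreCompat u₁ u₂ s θ' θ'' → OddsLe lam θ' θ'' p}
  else DeltaOn (Θtypes u₁ s)

/-- Rationality-compatible equilibrium. -/
def RCE (lam : Θ → ℝ) (u₁ u₂ : Θ → S → A → ℝ)
    (π₁ : Θ → S → ℝ) (π₂ : S → A → ℝ) : Prop :=
  NashEq lam u₁ u₂ π₁ π₂ ∧
  ∀ s a, π₂ s a ≠ 0 → ∃ p ∈ Pt lam u₁ u₂ π₁ π₂ s, a ∈ BRb u₂ p s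

/-- `P̂(s)`: uniformly rationality-compatible beliefs. -/
def Ph (lam : Θ → ℝ) (u₁ u₂ : Θ → S → A → ℝ) (s : S) : Set (Θ → ℝ) :=
  DeltaOn (Θtypes u₁ s) ∩
    {p | ∀ θ' θ'', MoreCompat u₁ u₂ s θ' θ'' → OddsLe lam θ' θ'' p}

/-- Uniform rationality-compatible equilibrium. -/
def URCE (lam : Θ → ℝ) (u₁ u₂ : Θ → S → A → ℝ)
    (π₁ : Θ → S → ℝ) (π₂ : S → A → ℝ) : Prop :=
  NashEq lam u₁ u₂ π₁ π₂ ∧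
  ∀ θ s, OffPath π₁ s → ∀ a, (∃ p ∈ Ph lam u₁ u₂ s, a ∈ BRb u₂ p s) →
    u₁ θ s a ≤ eqPayoff u₁ π₁ π₂ θ

/-- Receiver's expected payoff of a mixed action `α` after `s` under belief `p`. -/
def expU2m (u₂ : Θ → S → A → ℝ) (p : Θ → ℝ) (s : S) (α : A → ℝ) : ℝ :=
  ∑ θ, p θ * ∑ a, α a * u₂ θ s a

/-- `MBR(p, s)`: mixed best responses to belief `p` after `s`. -/
def MBRb (u₂ : Θ → S → A → ℝ) (p : Θ → ℝ) (s : S) : Set (A → ℝ) :=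
  {α | IsDist α ∧ ∀ α', IsDist α' → expU2m u₂ p s α' ≤ expU2m u₂ p s α}

/-- `MBR(s)`. -/
def MBR (u₂ : Θ → S → A → ℝ) (s : S) : Set (A → ℝ) :=
  {α | ∃ p, IsDist p ∧ α ∈ MBRb u₂ p s}

/-- `u₁(θ, s, α)` for a mixed action `α`. -/
def u1m (u₁ : Θ → S → A → ℝ) (θ : Θ) (s : S) (α : A → ℝ) : ℝ :=
  ∑ a, α a * u₁ θ s a

/-- `D(θ, s; π)`. -/
def Dset (u₁ u₂ : Θ → S → A → ℝ) (π₁ : Θ → S → ℝ) (π₂ : S → A → ℝ)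
    (θ : Θ) (s : S) : Set (A → ℝ) :=
  {α | α ∈ MBR u₂ s ∧ eqPayoff u₁ π₁ π₂ θ < u1m u₁ θ s α}

/-- `D°(θ, s; π)`. -/
def D0set (u₁ u₂ : Θ → S → A → ℝ) (π₁ : Θ → S → ℝ) (π₂ : S → A → ℝ)
    (θ : Θ) (s : S) : Set (A → ℝ) :=
  {α | α ∈ MBR u₂ s ∧ eqPayoff u₁ π₁ π₂ θ = u1m u₁ θ s α}

/-! ### The three-signal game (RCE that is not divine) -/

/-- Sender types: `t1 = θ'`, `t2 = θ''`. -/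
inductive Ty | t1 | t2
deriving DecidableEq

instance : Fintype Ty := ⟨{Ty.t1, Ty.t2}, fun x => by cases x <;> simp⟩

/-- Signals: `s1 = s'`, `s2 = s''`, `s3 = s'''`. -/
inductive Sg | s1 | s2 | s3
deriving DecidableEq

instance : Fintype Sg := ⟨{Sg.s1, Sg.s2, Sg.s3}, fun x => by cases x <;> simp⟩

/-- Receiver actions: `a1 = a'`, `a2 = a''`. -/
inductive Ac | a1 | a2
deriving DecidableEq

instance : Fintype Ac := ⟨{Ac.a1, Ac.a2}, fun x => by cases x <;> simp⟩

/-- Prior: `λ(θ') = 2/3`, `λ(θ'') = 1/3`. -/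
def lamG : Ty → ℝ
  | .t1 => 2 / 3
  | .t2 => 1 / 3

/-- Sender payoffs. -/
def u1G : Ty → Sg → Ac → ℝ
  | .t1, .s1, .a1 => 0
  | .t1, .s1, .a2 => -1
  | .t2, .s1, .a1 => 0
  | .t2, .s1, .a2 => -1
  | .t1, .s2, .a1 => 2
  | .t1, .s2, .a2 => -1
  | .t2, .s2, .a1 => 1
  | .t2, .s2, .a2 => -1
  | .t1, .s3, .a1 => 5
  | .t1, .s3, .a2 => -3
  | .t2, .s3, .a1 => 0
  | .t2, .s3, .a2 => -2

/-- Receiver payoffs. -/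
def u2G : Ty → Sg → Ac → ℝ
  | .t1, .s1, .a1 => 1
  | .t1, .s1, .a2 => 0
  | .t2, .s1, .a1 => 0
  | .t2, .s1, .a2 => 1
  | .t1, .s2, .a1 => 1
  | .t1, .s2, .a2 => 0
  | .t2, .s2, .a1 => 0
  | .t2, .s2, .a2 => 1
  | .t1, .s3, .a1 => 0
  | .t1, .s3, .a2 => 1
  | .t2, .s3, .a1 => 1
  | .t2, .s3, .a2 => 0

/-- Both types pool on `s'`. -/
def pi1G : Ty → Sg → ℝ := fun _ s => if s = Sg.s1 then 1 else 0

/-- The receiver plays `a'` after `s'` and `a''` after `s''` and `s'''`. -/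
def pi2G : Sg → Ac → ℝ
  | .s1, .a1 => 1
  | .s2, .a2 => 1
  | .s3, .a2 => 1
  | _, _ => 0

end

/-!
Under the pooling profile both types get `0`, while `a'` is a best reply to some belief after
every signal and gives each type at least `0`; hence `J̃(s, π) = Θ` for every `s`, and `P̃(s, π)`
is the set of all beliefs obeying the odds constraints `P_{θ'▷θ''}` for `θ' ≿_s θ''`. After `s'`
the prior supports `a'` and meets every odds constraint with equality. After `s''` (resp. `s'''`)
the point mass on `θ''` (resp. `θ'`) supports `a''`, and it meets every odds constraint because
the rational receiver strategy "always `a'`" refutes `θ' ≿_{s''} θ''` and `θ'' ≿_{s'''} θ'`.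
-/

noncomputable section

section PureStrategy

variable {X Y : Type*} [DecidableEq Y]

def pureStrategy (σ : X → Y) : X → Y → ℝ := fun x => Pi.single (σ x) 1

theorem sum_single_one_mul [Fintype Y] (y : Y) (f : Y → ℝ) :
    ∑ y', (Pi.single y 1 : Y → ℝ) y' * f y' = f y := by
  simp [Pi.single_apply]

theorem isDist_single [Fintype Y] (y : Y) : IsDist (Pi.single y 1 : Y → ℝ) :=
  ⟨(Pi.single_nonneg (α := fun _ => ℝ)).2 zero_le_one, by simp⟩

theorem isDist_pureStrategy [Fintype Y] (σ : X → Y) (x : X) : IsDist (pureStrategy σ x) :=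
  isDist_single (σ x)

theorem eq_of_pureStrategy_ne_zero {σ : X → Y} {x : X} {y : Y} (h : pureStrategy σ x y ≠ 0) :
    y = σ x := by
  by_contra hy
  simp [pureStrategy, hy] at h

end PureStrategy

section SignalingGame

variable {Θ S A : Type*} {lam : Θ → ℝ} {u₁ u₂ : Θ → S → A → ℝ}

theorem u1R_pureStrategy [Fintype A] [DecidableEq A] (σ : S → A) (θ : Θ) (s : S) :
    u1R u₁ (pureStrategy σ) θ s = u₁ θ s (σ s) :=
  sum_single_one_mul _ _

theorem eqPayoff_pureStrategy [Fintype S] [Fintype A] [DecidableEq S] (τ : Θ → S)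
    (π₂ : S → A → ℝ) (θ : Θ) : eqPayoff u₁ (pureStrategy τ) π₂ θ = u1R u₁ π₂ θ (τ θ) :=
  sum_single_one_mul _ _

theorem mem_BRb_single_iff [Fintype Θ] [DecidableEq Θ] {θ : Θ} {s : S} {a : A} :
    a ∈ BRb u₂ (Pi.single θ 1) s ↔ ∀ a', u₂ θ s a' ≤ u₂ θ s a := by
  simp only [BRb, expU2, Set.mem_ofPred_eq, sum_single_one_mul]

theorem rational2_pureStrategy [Fintype Θ] [Fintype A] [DecidableEq A] {σ : S → A}
    (hσ : ∀ s, σ s ∈ ABR u₂ s) : Rational2 u₂ (pureStrategy σ) :=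
  ⟨isDist_pureStrategy σ, fun s _ ha => eq_of_pureStrategy_ne_zero ha ▸ hσ s⟩

theorem not_moreCompat_of_pureStrategy [Fintype Θ] [Fintype A] [DecidableEq A] {σ : S → A}
    (hσ : ∀ s, σ s ∈ ABR u₂ s) {s s' : S} {θ' θ'' : Θ}
    (hweak : ∀ t, u₁ θ'' t (σ t) ≤ u₁ θ'' s (σ s)) (hne : s' ≠ s)
    (hdev : u₁ θ' s (σ s) ≤ u₁ θ' s' (σ s')) : ¬ MoreCompat u₁ u₂ s θ' θ'' := by
  intro h
  have hstrict := h (pureStrategy σ) (rational2_pureStrategy hσ)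
    (fun t _ => by simpa only [u1R_pureStrategy] using hweak t) s' hne
  simp only [u1R_pureStrategy] at hstrict
  exact hdev.not_gt hstrict

theorem nashEq_pooling [Fintype Θ] [Fintype S] [Fintype A] [DecidableEq S] [DecidableEq A]
    {s₀ : S} {σ : S → A} (hsender : ∀ θ s, u₁ θ s (σ s) ≤ u₁ θ s₀ (σ s₀))
    (hreceiver : σ s₀ ∈ BRb u₂ lam s₀) :
    NashEq lam u₁ u₂ (pureStrategy fun _ => s₀) (pureStrategy σ) := by
  refine ⟨isDist_pureStrategy _, isDist_pureStrategy σ, ?_, ?_⟩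
  · intro θ s hs t
    rw [eq_of_pureStrategy_ne_zero hs, u1R_pureStrategy, u1R_pureStrategy]
    exact hsender θ t
  · rintro s ⟨θ, hs⟩ a ha a'
    obtain rfl := eq_of_pureStrategy_ne_zero hs
    obtain rfl := eq_of_pureStrategy_ne_zero ha
    simpa [pureStrategy, expU2] using hreceiver a'

theorem rce_of_pureStrategy [Fintype Θ] [Fintype S] [Fintype A] [DecidableEq A]
    {π₁ : Θ → S → ℝ} {σ : S → A} (hNash : NashEq lam u₁ u₂ π₁ (pureStrategy σ))
    (hbelief : ∀ s, ∃ p ∈ Pt lam u₁ u₂ π₁ (pureStrategy σ) s, σ s ∈ BRb u₂ p s) :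
    RCE lam u₁ u₂ π₁ (pureStrategy σ) :=
  ⟨hNash, fun s _ ha => eq_of_pureStrategy_ne_zero ha ▸ hbelief s⟩

theorem mem_Pt_of_forall_mem_Jt [Fintype Θ] [Fintype S] [Fintype A] {π₁ : Θ → S → ℝ}
    {π₂ : S → A → ℝ} {s : S} {p : Θ → ℝ} (hJ : ∀ θ, θ ∈ Jt u₁ u₂ π₁ π₂ s) (hp : IsDist p)
    (hodds : ∀ θ' θ'', MoreCompat u₁ u₂ s θ' θ'' → OddsLe lam θ' θ'' p) :
    p ∈ Pt lam u₁ u₂ π₁ π₂ s := by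
  obtain ⟨θ, -, -⟩ := Finset.exists_ne_zero_of_sum_ne_zero (hp.2.symm ▸ one_ne_zero)
  rw [Pt, if_pos ⟨θ, hJ θ⟩]
  exact ⟨⟨hp, fun θ hθ => absurd (hJ θ) hθ⟩, hodds⟩

theorem oddsLe_prior (θ' θ'' : Θ) : OddsLe lam θ' θ'' lam :=
  le_rfl

theorem oddsLe_single [DecidableEq Θ] {θ θ' θ'' : Θ} (hlam : 0 ≤ lam θ'')
    (h : θ'' = θ → θ' = θ) : OddsLe lam θ' θ'' (Pi.single θ 1) := by
  by_cases hθ'' : θ'' = θ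
  · obtain rfl := h hθ''
    subst hθ''
    exact (mul_comm _ _).le
  · simpa [OddsLe, hθ''] using mul_nonneg hlam
      ((Pi.single_nonneg (α := fun _ => ℝ)).2 zero_le_one θ')

theorem single_mem_Pt [Fintype Θ] [Fintype S] [Fintype A] [DecidableEq Θ] {π₁ : Θ → S → ℝ}
    {π₂ : S → A → ℝ} {s : S} {θ : Θ} (hJ : ∀ θ, θ ∈ Jt u₁ u₂ π₁ π₂ s) (hlam : ∀ θ, 0 ≤ lam θ)
    (hcompat : ∀ θ', MoreCompat u₁ u₂ s θ' θ → θ' = θ) :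
    Pi.single θ 1 ∈ Pt lam u₁ u₂ π₁ π₂ s :=
  mem_Pt_of_forall_mem_Jt hJ (isDist_single θ) fun θ' _ hθ =>
    oddsLe_single (hlam _) fun h => hcompat θ' (h ▸ hθ)

end SignalingGame

theorem sum_Ty (f : Ty → ℝ) : ∑ θ, f θ = f .t1 + f .t2 := by
  simp [Finset.univ, Fintype.elems]

theorem lamG_nonneg (θ : Ty) : 0 ≤ lamG θ := by
  cases θ <;> norm_num [lamG]

theorem isDist_lamG : IsDist lamG :=
  ⟨lamG_nonneg, by norm_num [sum_Ty, lamG]⟩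

def receiverPlay : Sg → Ac
  | .s1 => .a1
  | _ => .a2

theorem pi1G_eq : pi1G = pureStrategy fun _ => Sg.s1 := by
  funext θ s
  simp [pi1G, pureStrategy, Pi.single_apply]

theorem pi2G_eq : pi2G = pureStrategy receiverPlay := by
  funext s a
  cases s <;> cases a <;> simp [pureStrategy, receiverPlay] <;> rfl

theorem a1_mem_ABR (s : Sg) : Ac.a1 ∈ ABR u2G s := by
  have of_type (θ : Ty) (hθ : ∀ a, u2G θ s a ≤ u2G θ s .a1) : Ac.a1 ∈ ABR u2G s :=
    ⟨_, isDist_single θ, mem_BRb_single_iff.2 hθ⟩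
  cases s
  · exact of_type .t1 (by rintro (_ | _) <;> norm_num [u2G])
  · exact of_type .t1 (by rintro (_ | _) <;> norm_num [u2G])
  · exact of_type .t2 (by rintro (_ | _) <;> norm_num [u2G])

theorem not_moreCompat_s2 : ¬ MoreCompat u1G u2G .s2 .t1 .t2 :=
  not_moreCompat_of_pureStrategy (σ := fun _ => .a1) a1_mem_ABR (s' := .s3)
    (by rintro (_ | _ | _) <;> norm_num [u1G]) (by decide) (by norm_num [u1G])

theorem not_moreCompat_s3 : ¬ MoreCompat u1G u2G .s3 .t2 .t1 :=
  not_moreCompat_of_pureStrategy (σ := fun _ => .a1) a1_mem_ABR (s' := .s2)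
    (by rintro (_ | _ | _) <;> norm_num [u1G]) (by decide) (by norm_num [u1G])

theorem mem_Jt_pooling (s : Sg) (θ : Ty) :
    θ ∈ Jt u1G u2G (pureStrategy fun _ => Sg.s1) (pureStrategy receiverPlay) s := by
  refine ⟨.a1, a1_mem_ABR s, ?_⟩
  rw [eqPayoff_pureStrategy, u1R_pureStrategy]
  cases s <;> cases θ <;> norm_num [u1G, receiverPlay]

/-- in the three-signal game, the pooling-on-`s'` profile is an RCE. -/
theorem three_signal_pooling_is_RCE :
    RCE lamG u1G u2G pi1G pi2G := by
  rw [pi1G_eq, pi2G_eq]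
  refine rce_of_pureStrategy
    (nashEq_pooling (by rintro (_ | _) (_ | _ | _) <;> norm_num [u1G, receiverPlay])
      (by rintro (_ | _) <;> norm_num [BRb, expU2, sum_Ty, lamG, u2G, receiverPlay]))
    fun s => ?_
  cases s
  · refine ⟨lamG, mem_Pt_of_forall_mem_Jt (mem_Jt_pooling _) isDist_lamG
      fun _ _ _ => oddsLe_prior _ _, ?_⟩
    rintro (_ | _) <;> norm_num [BRb, expU2, sum_Ty, lamG, u2G, receiverPlay]
  · refine ⟨Pi.single .t2 1, single_mem_Pt (mem_Jt_pooling _) lamG_nonneg ?_, ?_⟩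
    · rintro (_ | _) h
      exacts [absurd h not_moreCompat_s2, rfl]
    · exact mem_BRb_single_iff.2 (by rintro (_ | _) <;> norm_num [u2G, receiverPlay])
  · refine ⟨Pi.single .t1 1, single_mem_Pt (mem_Jt_pooling _) lamG_nonneg ?_, ?_⟩
    · rintro (_ | _) h
      exacts [rfl, absurd h not_moreCompat_s3]
    · exact mem_BRb_single_iff.2 (by rintro (_ | _) <;> norm_num [u2G, receiverPlay])

end
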